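/- Let G be a simple graph on a vertex type V, let u, v ∈ V, and let 𝒫 be a finite family of subsets of V such that any two distinct vertices lying in the same member of 𝒫 are adjacent in G. Suppose there is a walk in G from u to v such that for each edge {x, y} of the walk there is some P ∈ 𝒫 with x ∈ P and y ∈ P. Then u and v are connected in G by a path of length at most the cardinality of 𝒫; in particular the graph distance from u to v in G is at most |𝒫|. -/
import Mathlib

open SimpleGraph

private lemma last_vertex_in {V : Type*} {G : SimpleGraph V} (p : Set V) :
    ∀ {a b : V} (w : G.Walk a b), (∃ y ∈ w.support, y ∈ p) →
      ∃ z, z ∈ p ∧ ∃ r : G.Walk z b,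
        (∀ e ∈ r.edges, e ∈ w.edges) ∧ ∀ y ∈ r.support, y ≠ z → y ∉ p := by
  intro a b w
  induction w with
  | nil =>
    rintro ⟨y, hy, hyp⟩
    simp only [SimpleGraph.Walk.support_nil, List.mem_singleton] at hy
    subst hy
    exact ⟨y, hyp, SimpleGraph.Walk.nil, by simp, by
      intro z hz hne
      simp only [SimpleGraph.Walk.support_nil, List.mem_singleton] at hz
      exact absurd hz hne⟩
  | cons h w ih =>
    rename_i a c b
    rintro ⟨y, hy, hyp⟩
    by_cases hc : ∃ y ∈ w.support, y ∈ p
    · obtain ⟨z, hzp, r, hre, hrs⟩ := ih hc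
      exact ⟨z, hzp, r, fun e he => by
        simp only [SimpleGraph.Walk.edges_cons, List.mem_cons]
        exact Or.inr (hre e he), hrs⟩
    · have hya : y = a := by
        simp only [SimpleGraph.Walk.support_cons, List.mem_cons] at hy
        rcases hy with h1 | h1
        · exact h1
        · exact absurd ⟨y, h1, hyp⟩ hc
      subst hya
      refine ⟨y, hyp, SimpleGraph.Walk.cons h w, fun e he => he, ?_⟩
      intro z hz hne
      simp only [SimpleGraph.Walk.support_cons, List.mem_cons] at hz
      rcases hz with h1 | h1
      · exact absurd h1 hne
      · exact fun hzp => hc ⟨z, h1, hzp⟩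

private lemma short_walk_aux {V : Type*} {G : SimpleGraph V} :
    ∀ (n : ℕ) (F : Finset (Set V)), F.card ≤ n →
      (∀ P ∈ F, ∀ x ∈ P, ∀ y ∈ P, x ≠ y → G.Adj x y) →
      ∀ (u v : V) (w : G.Walk u v),
        (∀ e ∈ w.edges, ∃ P ∈ F, ∀ x ∈ e, x ∈ P) →
        ∃ q : G.Walk u v, q.length ≤ F.card := by
  classical
  intro n
  induction n with
  | zero =>
    intro F hF hclique u v w hw
    cases w with
    | nil => exact ⟨SimpleGraph.Walk.nil, by simp⟩
    | cons h w' =>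
      rename_i c
      obtain ⟨P, hP, _⟩ := hw s(u, c) (by simp)
      simp only [Nat.le_zero, Finset.card_eq_zero] at hF
      subst hF
      exact absurd hP (by simp)
  | succ m ih =>
    intro F hF hclique u v w hw
    cases w with
    | nil => exact ⟨SimpleGraph.Walk.nil, by simp⟩
    | cons h w' =>
      rename_i x
      obtain ⟨P, hP, hPe⟩ := hw s(u, x) (by simp)
      have huP : u ∈ P := hPe u (by simp)
      have hxP : x ∈ P := hPe x (by simp)
      obtain ⟨z, hzP, r, hre, hrs⟩ :=
        last_vertex_in P w' ⟨x, w'.start_mem_support, hxP⟩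
      have hcard : 1 ≤ F.card := Finset.card_pos.mpr ⟨P, hP⟩
      have hcov : ∀ e ∈ r.edges, ∃ Q ∈ F.erase P, ∀ y ∈ e, y ∈ Q := by
        intro e he
        obtain ⟨Q, hQ, hQe⟩ := hw e (by
          simp only [SimpleGraph.Walk.edges_cons, List.mem_cons]
          exact Or.inr (hre e he))
        refine ⟨Q, Finset.mem_erase.mpr ⟨?_, hQ⟩, hQe⟩
        rintro rfl
        induction e with
        | h a b =>
          have hab : a ≠ b := (r.edges_subset_edgeSet he).ne
          have ha := r.fst_mem_support_of_mem_edges he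
          have hb := r.snd_mem_support_of_mem_edges he
          by_cases haz : a = z
          · exact hrs b hb (fun hbz => hab (haz.trans hbz.symm))
              (hQe b (Sym2.mem_mk_right a b))
          · exact hrs a ha haz (hQe a (Sym2.mem_mk_left a b))
      obtain ⟨q, hq⟩ := ih (F.erase P)
        (by
          have := Finset.card_erase_of_mem hP
          omega)
        (fun Q hQ => hclique Q (Finset.mem_of_mem_erase hQ)) z v r hcov
      rw [Finset.card_erase_of_mem hP] at hq
      by_cases huz : u = z
      · subst huz
        exact ⟨q, by omega⟩
      · exact ⟨SimpleGraph.Walk.cons (hclique P hP u huP z hzP huz) q, by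
          simp only [SimpleGraph.Walk.length_cons]; omega⟩

/-- Graph-theoretic core of the diameter bound of Lemma 6.4 (lconnectedlem)
of Johnson, "Flipping and stabilizing Heegaard splittings": if `u` and `v`
are joined by a walk each of whose edges lies in a member of a finite
family `F` of cliques, then they are joined by a path of length at most
`|F|`; in particular the graph distance is at most `|F|`. -/
theorem walk_through_cliques_short_path {V : Type*} (G : SimpleGraph V)
    (u v : V) (F : Finset (Set V))
    (hclique : ∀ P ∈ F, ∀ x ∈ P, ∀ y ∈ P, x ≠ y → G.Adj x y)
    (hwalk : ∃ w : G.Walk u v, ∀ e ∈ w.edges, ∃ P ∈ F, ∀ x ∈ e, x ∈ P) :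
    (∃ p : G.Walk u v, p.IsPath ∧ p.length ≤ F.card) ∧
      G.dist u v ≤ F.card := by
  classical
  obtain ⟨w, hw⟩ := hwalk
  obtain ⟨q, hq⟩ := short_walk_aux F.card F le_rfl hclique u v w hw
  refine ⟨⟨q.bypass, q.bypass_isPath, le_trans q.length_bypass_le hq⟩, ?_⟩
  exact le_trans (SimpleGraph.dist_le q) hq
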